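/- arXiv:math/0509018 — 2 statements merged into one kernel-verified Lean document; each statement's English description precedes it below -/
import Mathlib

section
/- With the Witt basis elements 𝔣, 𝔣⁺ as above, the operator D±_{x,t} = Σⱼ eⱼ ∂/∂xⱼ + 𝔣 ∂ₜ ± i𝔣⁺ (with i the complex imaginary unit, commuting with all generators) satisfies (D±_{x,t})²u = -Δu ± i ∂ₜ u for smooth complexified-Clifford-valued functions u; in particular D⁻_{x,t} squares to the Schrödinger operator -Δ - i∂ₜ. -/
/-!
Write `D u = Σⱼ eⱼ ∂ⱼu + 𝔣 ∂ₜu + c 𝔣⁺ u`. Differentiating once more, `D (D u)` is a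
noncommutative polynomial in the generators whose coefficients are second derivatives of `u`.
The Hessian is symmetric, so the `eᵢeⱼ` terms pair into anticommutators `-2δᵢⱼ` and give `-Δu`;
the mixed terms `eⱼ𝔣` and `eⱼ𝔣⁺` cancel by anticommutation; `𝔣² = (𝔣⁺)² = 0` kills `∂ₜ²u` and the
`c²` term; and the cross term `c (𝔣𝔣⁺ + 𝔣⁺𝔣) ∂ₜu = c ∂ₜu` is all that remains.
-/

section CliffordWitt

variable {A : Type*} [Ring A] [Algebra ℂ A] {n : ℕ} (e : Fin n → A) (fW fP : A) (c : ℂ)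

theorem sum_mul_sum_eq_neg_sum_diag
    (he : ∀ i j : Fin n, e i * e j + e j * e i = if i = j then (-2 : A) else 0)
    {a : Fin n → Fin n → A} (ha : ∀ i j, a i j = a j i) :
    ∑ i, e i * ∑ j, e j * a i j = -∑ j, a j j := by
  set S := ∑ i, e i * ∑ j, e j * a i j
  have hS2 : S + S = ∑ i, ∑ j, (e i * e j + e j * e i) * a i j := by
    have hswap : S = ∑ i, ∑ j, e j * (e i * a i j) := by
      simp only [S, Finset.mul_sum]
      rw [Finset.sum_comm]
      simp only [ha]
    conv_lhs => arg 2; rw [hswap]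
    simp only [S, Finset.mul_sum, ← Finset.sum_add_distrib, add_mul, mul_assoc]
  have hdiag : ∑ i, ∑ j, (e i * e j + e j * e i) * a i j = (-∑ j, a j j) + -∑ j, a j j := by
    simp [he, ite_mul, ← two_mul, Finset.mul_sum]
  have h2 : (2 : ℂ) • S = (2 : ℂ) • -∑ j, a j j := by
    rw [two_smul, two_smul, hS2, hdiag]
  simpa using congrArg ((2 : ℂ)⁻¹ • ·) h2

def parabolicDiracSymbol (g : Fin n → A) (g₀ v : A) : A :=
  ∑ j, e j * g j + fW * g₀ + c • (fP * v)

theorem parabolicDiracSymbol_square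
    (he : ∀ i j : Fin n, e i * e j + e j * e i = if i = j then (-2 : A) else 0)
    (hW : fW * fP + fP * fW = 1) (hW2 : fW * fW = 0) (hP2 : fP * fP = 0)
    (hWe : ∀ j, fW * e j + e j * fW = 0) (hPe : ∀ j, fP * e j + e j * fP = 0)
    {a : Fin n → Fin n → A} (ha : ∀ i j, a i j = a j i) (b g : Fin n → A) (t g₀ v : A) :
    ∑ i, e i * parabolicDiracSymbol e fW fP c (a i) (b i) (g i)
        + fW * parabolicDiracSymbol e fW fP c b t g₀
        + c • (fP * parabolicDiracSymbol e fW fP c g g₀ v)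
      = -∑ j, a j j + c • g₀ := by
  have heW : ∀ j, e j * fW = -(fW * e j) := fun j => eq_neg_of_add_eq_zero_right (hWe j)
  have heP : ∀ j, e j * fP = -(fP * e j) := fun j => eq_neg_of_add_eq_zero_right (hPe j)
  have hPW : fP * fW = 1 - fW * fP := eq_sub_of_add_eq' hW
  simp only [parabolicDiracSymbol, mul_add, Finset.sum_add_distrib,
    sum_mul_sum_eq_neg_sum_diag e he ha]
  simp only [Finset.mul_sum, mul_smul_comm, smul_add, ← mul_assoc, heW, heP, hPW, hW2, hP2,
    neg_mul, zero_mul, smul_zero, smul_neg, smul_sub, Finset.sum_neg_distrib, Finset.smul_sum,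
    sub_mul, one_mul]
  abel

end CliffordWitt

theorem hasFDerivAt_fderiv_apply {𝕜 E F : Type*} [NontriviallyNormedField 𝕜]
    [NormedAddCommGroup E] [NormedSpace 𝕜 E] [NormedAddCommGroup F] [NormedSpace 𝕜 F]
    {u : E → F} {p : E} (h : DifferentiableAt 𝕜 (fderiv 𝕜 u) p) (w : E) :
    HasFDerivAt (fun q => fderiv 𝕜 u q w)
      ((ContinuousLinearMap.apply 𝕜 F w).comp (fderiv 𝕜 (fderiv 𝕜 u) p)) p :=
  (ContinuousLinearMap.apply 𝕜 F w).hasFDerivAt.comp p h.hasFDerivAt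

section ParabolicDirac

variable {A : Type*} [NormedRing A] [NormedAlgebra ℂ A] [NormedSpace ℝ A]
  {E : Type*} [NormedAddCommGroup E] [NormedSpace ℝ E]

/- `A` carries no `NormedAlgebra ℝ A` compatible with the given `NormedSpace ℝ A`, so
`HasFDerivAt.const_mul` does not apply; left multiplication is `ℂ`-linear instead. -/
theorem HasFDerivAt.const_mul_of_complexAlgebra {f : E → A} {f' : E →L[ℝ] A} {p : E}
    (hf : HasFDerivAt f f' p) (d : A) :
    HasFDerivAt (fun q => d * f q) (((ContinuousLinearMap.mul ℂ A d).restrictScalars ℝ).comp f') p :=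
  ((ContinuousLinearMap.mul ℂ A d).restrictScalars ℝ).hasFDerivAt.comp p hf

variable {n : ℕ} (e : Fin n → A) (fW fP : A) (c : ℂ) (b : Fin n → E) (τ : E)

/- The paper's `D±_{x,t}` is the case `E = ℝⁿ × ℝ`, `b j = (eⱼ, 0)`, `τ = (0, 1)`, `c = ±i`. -/
noncomputable def parabolicDirac (u : E → A) (q : E) : A :=
  parabolicDiracSymbol e fW fP c (fun j => fderiv ℝ u q (b j)) (fderiv ℝ u q τ) (u q)

theorem fderiv_parabolicDirac_apply {u : E → A} {p : E} (hu : DifferentiableAt ℝ u p)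
    (hu' : DifferentiableAt ℝ (fderiv ℝ u) p) (v : E) :
    fderiv ℝ (parabolicDirac e fW fP c b τ u) p v
      = parabolicDiracSymbol e fW fP c (fun j => fderiv ℝ (fderiv ℝ u) p v (b j))
          (fderiv ℝ (fderiv ℝ u) p v τ) (fderiv ℝ u p v) := by
  have hD : HasFDerivAt (parabolicDirac e fW fP c b τ u) _ p :=
    ((HasFDerivAt.fun_sum fun j _ =>
        (hasFDerivAt_fderiv_apply hu' (b j)).const_mul_of_complexAlgebra (e j)).add
      ((hasFDerivAt_fderiv_apply hu' τ).const_mul_of_complexAlgebra fW)).add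
      ((hu.hasFDerivAt.const_mul_of_complexAlgebra fP).const_smul c)
  rw [hD.fderiv]
  simp [parabolicDiracSymbol]

theorem parabolicDirac_parabolicDirac
    (he : ∀ i j : Fin n, e i * e j + e j * e i = if i = j then (-2 : A) else 0)
    (hW : fW * fP + fP * fW = 1) (hW2 : fW * fW = 0) (hP2 : fP * fP = 0)
    (hWe : ∀ j, fW * e j + e j * fW = 0) (hPe : ∀ j, fP * e j + e j * fP = 0)
    {u : E → A} {p : E} (hu : ContDiffAt ℝ 2 u p) :
    parabolicDirac e fW fP c b τ (parabolicDirac e fW fP c b τ u) p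
      = -∑ j, fderiv ℝ (fun q => fderiv ℝ u q (b j)) p (b j) + c • fderiv ℝ u p τ := by
  have hu₁ : DifferentiableAt ℝ u p := hu.differentiableAt (by norm_num)
  have hu₂ : DifferentiableAt ℝ (fderiv ℝ u) p :=
    (hu.fderiv_right (m := 1) (by norm_num)).differentiableAt one_ne_zero
  have hsymm : IsSymmSndFDerivAt ℝ u p := hu.isSymmSndFDerivAt (by simp)
  simp only [parabolicDirac, fderiv_parabolicDirac_apply e fW fP c b τ hu₁ hu₂,
    fun j => (hasFDerivAt_fderiv_apply hu₂ (b j)).fderiv, hsymm.eq _ τ]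
  exact parabolicDiracSymbol_square e fW fP c he hW hW2 hP2 hWe hPe
    (fun i j => hsymm.eq _ _) _ _ _ _ _

end ParabolicDirac

theorem parabolic_dirac_factorizes_schroedinger_general
    {n : ℕ} {A : Type*} [NormedRing A] [NormedAlgebra ℂ A]
    [NormedSpace ℝ A]
    (e : Fin n → A) (fW fP : A)
    (he : ∀ i j : Fin n, e i * e j + e j * e i = if i = j then (-2 : A) else 0)
    (hW : fW * fP + fP * fW = 1) (hW2 : fW * fW = 0) (hP2 : fP * fP = 0)
    (hWe : ∀ j, fW * e j + e j * fW = 0) (hPe : ∀ j, fP * e j + e j * fP = 0)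
    (σ : ℂ)
    (u : (Fin n → ℝ) × ℝ → A) (hu : ContDiff ℝ 2 u) (p : (Fin n → ℝ) × ℝ) :
    (∑ i, e i * fderiv ℝ (fun q => (∑ j, e j * fderiv ℝ u q (Pi.single j 1, 0))
            + fW * fderiv ℝ u q (0, 1) + (σ * Complex.I) • (fP * u q)) p (Pi.single i 1, 0))
      + fW * fderiv ℝ (fun q => (∑ j, e j * fderiv ℝ u q (Pi.single j 1, 0))
            + fW * fderiv ℝ u q (0, 1) + (σ * Complex.I) • (fP * u q)) p (0, 1)
      + (σ * Complex.I) • (fP * ((∑ j, e j * fderiv ℝ u p (Pi.single j 1, 0))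
            + fW * fderiv ℝ u p (0, 1) + (σ * Complex.I) • (fP * u p)))
      = (-∑ j, fderiv ℝ (fun q => fderiv ℝ u q (Pi.single j 1, 0)) p (Pi.single j 1, 0))
        + (σ * Complex.I) • fderiv ℝ u p (0, 1) :=
  parabolicDirac_parabolicDirac e fW fP (σ * Complex.I) (fun j => (Pi.single j 1, 0)) (0, 1)
    he hW hW2 hP2 hWe hPe hu.contDiffAt

/-- With Witt basis elements `𝔣, 𝔣⁺`, the operator
`D±_{x,t} = Σⱼ eⱼ∂ⱼ + 𝔣∂ₜ ± i𝔣⁺` satisfies `(D±_{x,t})²u = -Δu ± i∂ₜu`; in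
particular `D⁻_{x,t}` squares to the Schrödinger operator `-Δ - i∂ₜ`. -/
theorem parabolic_dirac_factorizes_schroedinger
    {n : ℕ} {A : Type*} [NormedRing A] [NormedAlgebra ℂ A]
    [NormedSpace ℝ A] [IsScalarTower ℝ ℂ A]
    (e : Fin n → A) (fW fP : A)
    (he : ∀ i j : Fin n, e i * e j + e j * e i = if i = j then (-2 : A) else 0)
    (hW : fW * fP + fP * fW = 1) (hW2 : fW * fW = 0) (hP2 : fP * fP = 0)
    (hWe : ∀ j, fW * e j + e j * fW = 0) (hPe : ∀ j, fP * e j + e j * fP = 0)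
    (σ : ℂ) (hσ : σ = 1 ∨ σ = -1)
    (u : (Fin n → ℝ) × ℝ → A) (hu : ContDiff ℝ 2 u) (p : (Fin n → ℝ) × ℝ) :
    (∑ i, e i * fderiv ℝ (fun q => (∑ j, e j * fderiv ℝ u q (Pi.single j 1, 0))
            + fW * fderiv ℝ u q (0, 1) + (σ * Complex.I) • (fP * u q)) p (Pi.single i 1, 0))
      + fW * fderiv ℝ (fun q => (∑ j, e j * fderiv ℝ u q (Pi.single j 1, 0))
            + fW * fderiv ℝ u q (0, 1) + (σ * Complex.I) • (fP * u q)) p (0, 1)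
      + (σ * Complex.I) • (fP * ((∑ j, e j * fderiv ℝ u p (Pi.single j 1, 0))
            + fW * fderiv ℝ u p (0, 1) + (σ * Complex.I) • (fP * u p)))
      = (-∑ j, fderiv ℝ (fun q => fderiv ℝ u q (Pi.single j 1, 0)) p (Pi.single j 1, 0))
        + (σ * Complex.I) • fderiv ℝ u p (0, 1) :=
  parabolic_dirac_factorizes_schroedinger_general e fW fP he hW hW2 hP2 hWe hPe σ u hu p
end

section
/- Let D be the Dirac operator, a : ℝⁿ → Cl(0,n) smooth, and M^a the right-multiplication operator M^a u = u·a. Then for smooth scalar-valued u (i.e. u = u·e₀ with u real-valued), (D + M^a)(D - M^a)u = -Δu - (Da + a²)u. Consequently (D + M^a)(D - M^a) equals the Schrödinger operator -Δ - V₀ on scalar functions if and only if Da + a² = V₀ (the Miura transform). -/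
/-!
For scalar `u` the Leibniz rule gives `D(u a) = (Du) a + u Da`, so in
`(D + Mᵃ)(D - Mᵃ) u = D²u - D(u a) + (Du) a - u a²` the terms `(Du) a` cancel, leaving
`D²u - u (Da + a²)`. On scalar functions `D² = -Δ`: `D²u = Σᵢⱼ ∂ᵢ∂ⱼu eᵢeⱼ`, the Hessian is
symmetric, and `eᵢeⱼ + eⱼeᵢ = -2δᵢⱼ`. Taking `u = 1` turns the identity into the Miura equation.
-/

open Finset

theorem sum_sum_smul_mul_eq_neg_trace_smul_one {ι K A : Type*} [Fintype ι] [DecidableEq ι]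
    [Field K] [CharZero K] [Ring A] [Algebra K A] (e : ι → A)
    (he : ∀ i j, e i * e j + e j * e i = if i = j then (-2 : A) else 0)
    (c : ι → ι → K) (hc : ∀ i j, c i j = c j i) :
    ∑ i, ∑ j, c i j • (e i * e j) = (-∑ i, c i i) • (1 : A) := by
  have hswap : ∑ i, ∑ j, c i j • (e i * e j) = ∑ i, ∑ j, c i j • (e j * e i) := by
    rw [sum_comm]
    exact sum_congr rfl fun i _ => sum_congr rfl fun j _ => by rw [hc]
  have htwo : (-2 : A) = (-2 : K) • (1 : A) := by
    rw [neg_smul, ofNat_smul_eq_nsmul, nsmul_one]; norm_num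
  refine smul_right_injective A (two_ne_zero (α := K)) ?_
  calc (2 : K) • ∑ i, ∑ j, c i j • (e i * e j)
      = ∑ i, ∑ j, c i j • (e i * e j + e j * e i) := by
        rw [two_smul]; nth_rewrite 2 [hswap]
        simp only [← sum_add_distrib, smul_add]
    _ = (2 : K) • (-∑ i, c i i) • (1 : A) := by
        simp only [he, smul_ite, smul_zero, sum_ite_eq, mem_univ, if_true, htwo, smul_smul,
          ← sum_smul]
        congr 1
        rw [← sum_mul]; ring

theorem fderiv_fderiv_apply {E F : Type*} [NormedAddCommGroup E] [NormedSpace ℝ E]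
    [NormedAddCommGroup F] [NormedSpace ℝ F] {u : E → F} {x : E}
    (hu : DifferentiableAt ℝ (fderiv ℝ u) x) (v w : E) :
    fderiv ℝ (fun y => fderiv ℝ u y w) x v = fderiv ℝ (fderiv ℝ u) x v w := by
  rw [fderiv_clm_apply hu (differentiableAt_const w)]
  simp

noncomputable section Dirac

variable {n : ℕ} {A : Type*} [NormedRing A] [NormedAlgebra ℝ A]

def dirac (e : Fin n → A) (f : (Fin n → ℝ) → A) (x : Fin n → ℝ) : A :=
  ∑ i, e i * fderiv ℝ f x (Pi.single i 1)

/-- `D` applied to the scalar function `u e₀`, i.e. `dirac e (fun y => u y • 1)`. -/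
def diracScalar (e : Fin n → A) (u : (Fin n → ℝ) → ℝ) (x : Fin n → ℝ) : A :=
  ∑ j, fderiv ℝ u x (Pi.single j 1) • e j

def coordLaplacian (u : (Fin n → ℝ) → ℝ) (x : Fin n → ℝ) : ℝ :=
  ∑ j, fderiv ℝ (fun y => fderiv ℝ u y (Pi.single j 1)) x (Pi.single j 1)

theorem dirac_sub {f g : (Fin n → ℝ) → A} {x : Fin n → ℝ} (e : Fin n → A)
    (hf : DifferentiableAt ℝ f x) (hg : DifferentiableAt ℝ g x) :
    dirac e (fun y => f y - g y) x = dirac e f x - dirac e g x := by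
  simp only [dirac, fderiv_fun_sub hf hg, sub_apply, mul_sub, sum_sub_distrib]

theorem dirac_smul {u : (Fin n → ℝ) → ℝ} {f : (Fin n → ℝ) → A} {x : Fin n → ℝ} (e : Fin n → A)
    (hu : DifferentiableAt ℝ u x) (hf : DifferentiableAt ℝ f x) :
    dirac e (fun y => u y • f y) x = diracScalar e u x * f x + u x • dirac e f x := by
  simp only [dirac, diracScalar, fderiv_fun_smul hu hf, add_apply,
    smul_apply, ContinuousLinearMap.smulRight_apply, mul_add, sum_add_distrib,
    mul_smul_comm, sum_mul, smul_mul_assoc, smul_sum]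
  rw [add_comm]

theorem differentiableAt_diracScalar {u : (Fin n → ℝ) → ℝ} {x : Fin n → ℝ} (e : Fin n → A)
    (hu : DifferentiableAt ℝ (fderiv ℝ u) x) :
    DifferentiableAt ℝ (diracScalar e u) x := by
  unfold diracScalar
  fun_prop

theorem dirac_diracScalar {u : (Fin n → ℝ) → ℝ} {x : Fin n → ℝ} (e : Fin n → A)
    (he : ∀ i j, e i * e j + e j * e i = if i = j then (-2 : A) else 0)
    (hu : ContDiffAt ℝ 2 u x) :
    dirac e (diracScalar e u) x = (-coordLaplacian u x) • (1 : A) := by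
  have hu' : DifferentiableAt ℝ (fderiv ℝ u) x :=
    (hu.fderiv_right (m := 1) le_rfl).differentiableAt one_ne_zero
  have hsymm : IsSymmSndFDerivAt ℝ u x := hu.isSymmSndFDerivAt (by simp)
  set c : Fin n → Fin n → ℝ := fun i j => fderiv ℝ (fderiv ℝ u) x (Pi.single i 1) (Pi.single j 1)
  have hD : ∀ i, fderiv ℝ (diracScalar e u) x (Pi.single i 1) = ∑ j, c i j • e j := by
    intro i
    have hpartial : ∀ w, DifferentiableAt ℝ (fun y => fderiv ℝ u y w) x :=
      fun w => hu'.clm_apply (differentiableAt_const w)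
    unfold diracScalar
    rw [fderiv_fun_sum fun j _ => (hpartial _).smul_const (e j)]
    simp only [_root_.sum_apply, fderiv_smul_const (hpartial _),
      ContinuousLinearMap.smulRight_apply, fderiv_fderiv_apply hu', c]
  calc dirac e (diracScalar e u) x = ∑ i, ∑ j, c i j • (e i * e j) := by
        simp only [dirac, hD, mul_sum, mul_smul_comm]
    _ = (-∑ i, c i i) • (1 : A) :=
        sum_sum_smul_mul_eq_neg_trace_smul_one e he c fun i j => hsymm _ _
    _ = (-coordLaplacian u x) • (1 : A) := by
        simp only [coordLaplacian, fderiv_fderiv_apply hu', c]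

/-- `(D + Mᵃ)(D - Mᵃ) u` at `x`, where `Mᵃ v = v a`. -/
def diracFactorization (e : Fin n → A) (a : (Fin n → ℝ) → A) (u : (Fin n → ℝ) → ℝ)
    (x : Fin n → ℝ) : A :=
  dirac e (fun y => diracScalar e u y - u y • a y) x + (diracScalar e u x - u x • a x) * a x

theorem diracFactorization_eq {u : (Fin n → ℝ) → ℝ} {a : (Fin n → ℝ) → A}
    {x : Fin n → ℝ} (e : Fin n → A)
    (he : ∀ i j, e i * e j + e j * e i = if i = j then (-2 : A) else 0)
    (hu : ContDiffAt ℝ 2 u x) (ha : DifferentiableAt ℝ a x) :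
    diracFactorization e a u x
      = (-coordLaplacian u x) • (1 : A) - u x • (dirac e a x + a x * a x) := by
  have hu₁ : DifferentiableAt ℝ u x := hu.differentiableAt two_ne_zero
  have hDu : DifferentiableAt ℝ (diracScalar e u) x :=
    differentiableAt_diracScalar e ((hu.fderiv_right (m := 1) le_rfl).differentiableAt one_ne_zero)
  rw [diracFactorization, dirac_sub e hDu (hu₁.fun_smul ha), dirac_smul e hu₁ ha,
    dirac_diracScalar e he hu, sub_mul, smul_mul_assoc, smul_add]
  abel

end Dirac

/-- With `M^a` right multiplication by `a`, for scalar-valued `u`: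
`(D + M^a)(D - M^a)u = -Δu - (Da + a²)u`; consequently this equals the Schrödinger
operator `-Δ - V₀` on scalar functions iff `Da + a² = V₀` (the Miura transform). -/
theorem dirac_right_mult_factorization
    {n : ℕ} {A : Type*} [NormedRing A] [NormedAlgebra ℝ A]
    (e : Fin n → A)
    (he : ∀ i j : Fin n, e i * e j + e j * e i = if i = j then (-2 : A) else 0)
    (a : (Fin n → ℝ) → A) (ha : ContDiff ℝ 1 a) (V₀ : (Fin n → ℝ) → ℝ) :
    (∀ u : (Fin n → ℝ) → ℝ, ContDiff ℝ 2 u → ∀ x : Fin n → ℝ,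
      (∑ i, e i * fderiv ℝ (fun y =>
            (∑ j, fderiv ℝ u y (Pi.single j 1) • e j) - u y • a y) x (Pi.single i 1))
        + ((∑ j, fderiv ℝ u x (Pi.single j 1) • e j) - u x • a x) * a x
      = (-∑ j, fderiv ℝ (fun y => fderiv ℝ u y (Pi.single j 1)) x (Pi.single j 1)) • (1 : A)
        - u x • ((∑ j, e j * fderiv ℝ a x (Pi.single j 1)) + a x * a x)) ∧
    ((∀ u : (Fin n → ℝ) → ℝ, ContDiff ℝ 2 u → ∀ x : Fin n → ℝ,
      (∑ i, e i * fderiv ℝ (fun y =>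
            (∑ j, fderiv ℝ u y (Pi.single j 1) • e j) - u y • a y) x (Pi.single i 1))
        + ((∑ j, fderiv ℝ u x (Pi.single j 1) • e j) - u x • a x) * a x
      = (-∑ j, fderiv ℝ (fun y => fderiv ℝ u y (Pi.single j 1)) x (Pi.single j 1)) • (1 : A)
        - (V₀ x * u x) • (1 : A)) ↔
      ∀ x : Fin n → ℝ,
        (∑ j, e j * fderiv ℝ a x (Pi.single j 1)) + a x * a x
          = algebraMap ℝ A (V₀ x)) := by
  show (∀ u : (Fin n → ℝ) → ℝ, ContDiff ℝ 2 u → ∀ x : Fin n → ℝ,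
      diracFactorization e a u x
        = (-coordLaplacian u x) • (1 : A) - u x • (dirac e a x + a x * a x)) ∧
    ((∀ u : (Fin n → ℝ) → ℝ, ContDiff ℝ 2 u → ∀ x : Fin n → ℝ,
      diracFactorization e a u x = (-coordLaplacian u x) • (1 : A) - (V₀ x * u x) • (1 : A)) ↔
      ∀ x : Fin n → ℝ, dirac e a x + a x * a x = algebraMap ℝ A (V₀ x))
  have hfactor : ∀ u : (Fin n → ℝ) → ℝ, ContDiff ℝ 2 u → ∀ x : Fin n → ℝ,
      diracFactorization e a u x
        = (-coordLaplacian u x) • (1 : A) - u x • (dirac e a x + a x * a x) :=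
    fun u hu x => diracFactorization_eq e he hu.contDiffAt (ha.differentiable one_ne_zero x)
  refine ⟨hfactor, fun h x => ?_, fun h u hu x => ?_⟩
  · have h₁ :=
      (hfactor (fun _ => 1) contDiff_const x).symm.trans (h (fun _ => 1) contDiff_const x)
    rwa [sub_right_inj, one_smul, mul_one, ← Algebra.algebraMap_eq_smul_one] at h₁
  · rw [hfactor u hu x, h x, Algebra.algebraMap_eq_smul_one, smul_smul, mul_comm]
end
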